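/- Let X be a finite point set in ℝ^d and H^+ a closed halfspace. Then L(X) ≤ |X ∩ H^+| + L(X \ H^+). -/
import Mathlib


open scoped Classical RealInnerProductSpace
open Metric MeasureTheory

/-- The set of extreme points (convex-layer vertices) of a finite point set. -/
noncomputable def extremePts {d : ℕ} (S : Finset (EuclideanSpace ℝ (Fin d))) :
    Finset (EuclideanSpace ℝ (Fin d)) :=
  S.filter fun x =>
    x ∉ convexHull ℝ ((S.erase x : Finset (EuclideanSpace ℝ (Fin d))) :
      Set (EuclideanSpace ℝ (Fin d)))

/-- `peel S k` is the set of points remaining after `k` peeling steps, i.e. `X_{k+1}`. -/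
noncomputable def peel {d : ℕ} (S : Finset (EuclideanSpace ℝ (Fin d))) :
    ℕ → Finset (EuclideanSpace ℝ (Fin d))
  | 0 => S
  | k + 1 => peel S k \ extremePts (peel S k)

/-- The layer number: the number of peeling steps needed to remove all points. -/
noncomputable def layerNum {d : ℕ} (S : Finset (EuclideanSpace ℝ (Fin d))) : ℕ :=
  sInf {k | peel S k = ∅}

lemma mem_extremePts {d : ℕ} {S : Finset (EuclideanSpace ℝ (Fin d))}
    {x : EuclideanSpace ℝ (Fin d)} :
    x ∈ extremePts S ↔ x ∈ S ∧
      x ∉ convexHull ℝ ((S.erase x : Finset (EuclideanSpace ℝ (Fin d))) :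
        Set (EuclideanSpace ℝ (Fin d))) := by
  simp [extremePts]

lemma extremePts_subset {d : ℕ} (S : Finset (EuclideanSpace ℝ (Fin d))) :
    extremePts S ⊆ S := Finset.filter_subset _ _

/-- Face lemma: an extreme point of the face where `⟪·,u⟫` attains its maximum
    is an extreme point of the whole set. -/
lemma face_extreme {d : ℕ} (S : Finset (EuclideanSpace ℝ (Fin d)))
    (u : EuclideanSpace ℝ (Fin d)) (m : ℝ) (hmax : ∀ y ∈ S, ⟪y, u⟫ ≤ m)
    {x : EuclideanSpace ℝ (Fin d)}
    (hx : x ∈ extremePts (S.filter fun y => ⟪y, u⟫ = m)) : x ∈ extremePts S := by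
  set F := S.filter fun y => ⟪y, u⟫ = m with hFdef
  obtain ⟨hxF, hxnot⟩ := mem_extremePts.1 hx
  have hxS : x ∈ S := (Finset.mem_filter.1 hxF).1
  have hxm : ⟪x, u⟫ = m := (Finset.mem_filter.1 hxF).2
  refine mem_extremePts.2 ⟨hxS, fun hmem => hxnot ?_⟩
  rw [Finset.convexHull_eq] at hmem
  obtain ⟨w, hw0, hw1, hcm⟩ := hmem
  set T := S.erase x with hTdef
  rw [Finset.centerMass_eq_of_sum_1 _ _ hw1] at hcm
  simp only [id] at hcm
  have hinner : ∑ y ∈ T, w y * ⟪y, u⟫ = m := by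
    have h := congrArg (fun z => ⟪z, u⟫) hcm
    simp only [sum_inner, real_inner_smul_left] at h
    rw [hxm] at h
    exact h
  have hzero : ∑ y ∈ T, w y * (m - ⟪y, u⟫) = 0 := by
    have : ∑ y ∈ T, w y * (m - ⟪y, u⟫)
        = (∑ y ∈ T, w y) * m - ∑ y ∈ T, w y * ⟪y, u⟫ := by
      rw [Finset.sum_mul, ← Finset.sum_sub_distrib]
      congr 1; ext y; ring
    rw [this, hw1, hinner]; ring
  have hkey : ∀ y ∈ T, w y ≠ 0 → y ∈ F := by
    intro y hyT hwy
    have hterm : w y * (m - ⟪y, u⟫) = 0 := by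
      have := (Finset.sum_eq_zero_iff_of_nonneg (fun y hy => by
        have hyS : y ∈ S := Finset.mem_of_mem_erase hy
        have := hmax y hyS
        have := hw0 y hy
        nlinarith)).1 hzero
      exact this y hyT
    have hyS : y ∈ S := Finset.mem_of_mem_erase hyT
    rcases mul_eq_zero.1 hterm with h | h
    · exact absurd h hwy
    · exact Finset.mem_filter.2 ⟨hyS, by linarith⟩
  -- x is a convex combination of points of `F.erase x`
  have hsub : F.erase x ⊆ T := by
    intro y hy
    exact Finset.mem_erase.2 ⟨(Finset.mem_erase.1 hy).1,
      (Finset.mem_filter.1 (Finset.mem_erase.1 hy).2).1⟩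
  have hzero' : ∀ y ∈ T, y ∉ F.erase x → w y = 0 := by
    intro y hyT hyF
    by_contra hwy
    exact hyF (Finset.mem_erase.2 ⟨(Finset.mem_erase.1 hyT).1, hkey y hyT hwy⟩)
  rw [Finset.convexHull_eq]
  refine ⟨w, fun y hy => hw0 y (hsub hy), ?_, ?_⟩
  · rw [Finset.sum_subset hsub hzero']; exact hw1
  · rw [Finset.centerMass_subset id hsub hzero',
      Finset.centerMass_eq_of_sum_1 _ _ hw1]
    simpa [id] using hcm

lemma extremePts_nonempty_aux {d : ℕ} :
    ∀ n (S : Finset (EuclideanSpace ℝ (Fin d))), S.card ≤ n → S.Nonempty →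
      (extremePts S).Nonempty := by
  intro n
  induction n with
  | zero =>
    intro S h hS
    rw [Finset.card_eq_zero.mp (Nat.le_zero.1 h)] at hS
    exact absurd hS (by simp)
  | succ n ih =>
    intro S hcard hS
    obtain ⟨a, ha⟩ := hS
    by_cases hall : ∀ b ∈ S, b = a
    · refine ⟨a, mem_extremePts.2 ⟨ha, ?_⟩⟩
      have he : S.erase a = ∅ := by
        ext y
        simp only [Finset.mem_erase, Finset.notMem_empty, iff_false, not_and]
        intro hy hyS; exact absurd (hall y hyS) hy
      simp [he]
    · push_neg at hall
      obtain ⟨b, hb, hba⟩ := hall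
      obtain ⟨x0, hx0S, hmax⟩ := S.exists_max_image (fun y => ⟪y, a - b⟫) ⟨a, ha⟩
      set m := ⟪x0, a - b⟫ with hm
      set F := S.filter fun y => ⟪y, a - b⟫ = m with hF
      have hFne : F.Nonempty := ⟨x0, Finset.mem_filter.2 ⟨hx0S, rfl⟩⟩
      have hab : ⟪a, a - b⟫ ≠ ⟪b, a - b⟫ := by
        intro h
        have h2 : ⟪a - b, a - b⟫ = 0 := by rw [inner_sub_left]; linarith
        exact (sub_ne_zero.2 (Ne.symm hba)) (inner_self_eq_zero.1 h2)
      have hFss : F ⊂ S := by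
        refine ⟨Finset.filter_subset _ _, fun hSF => ?_⟩
        have haF := Finset.mem_filter.1 (hSF ha)
        have hbF := Finset.mem_filter.1 (hSF hb)
        exact hab (haF.2.trans hbF.2.symm)
      have hFcard : F.card ≤ n :=
        Nat.lt_succ_iff.1 (lt_of_lt_of_le (Finset.card_lt_card hFss) hcard)
      obtain ⟨x, hx⟩ := ih F hFcard hFne
      exact ⟨x, face_extreme S (a - b) m hmax hx⟩

lemma extremePts_nonempty {d : ℕ} {S : Finset (EuclideanSpace ℝ (Fin d))}
    (hS : S.Nonempty) : (extremePts S).Nonempty :=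
  extremePts_nonempty_aux S.card S le_rfl hS

lemma exists_extreme_filter {d : ℕ} (X : Finset (EuclideanSpace ℝ (Fin d)))
    (u : EuclideanSpace ℝ (Fin d)) (c : ℝ)
    (hA : (X.filter fun x => c ≤ ⟪x, u⟫).Nonempty) :
    ∃ x ∈ extremePts X, c ≤ ⟪x, u⟫ := by
  obtain ⟨x0, hx0, hmax⟩ :=
    (X.filter fun x => c ≤ ⟪x, u⟫).exists_max_image (fun y => ⟪y, u⟫) hA
  set m := ⟪x0, u⟫ with hm
  have hcm : c ≤ m := (Finset.mem_filter.1 hx0).2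
  have hglob : ∀ y ∈ X, ⟪y, u⟫ ≤ m := by
    intro y hy
    by_cases h : c ≤ ⟪y, u⟫
    · exact hmax y (Finset.mem_filter.2 ⟨hy, h⟩)
    · linarith [not_le.1 h]
  set F := X.filter fun y => ⟪y, u⟫ = m with hF
  have hFne : F.Nonempty := ⟨x0, Finset.mem_filter.2 ⟨(Finset.mem_filter.1 hx0).1, rfl⟩⟩
  obtain ⟨x, hx⟩ := extremePts_nonempty hFne
  refine ⟨x, face_extreme X u m hglob hx, ?_⟩
  have hxF : x ∈ F := extremePts_subset F hx
  have := (Finset.mem_filter.1 hxF).2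
  linarith

lemma peel_empty_of_empty {d : ℕ} {S : Finset (EuclideanSpace ℝ (Fin d))} {k : ℕ}
    (h : peel S k = ∅) : peel S (k + 1) = ∅ := by
  simp [peel, h]

lemma peel_card {d : ℕ} (S : Finset (EuclideanSpace ℝ (Fin d))) :
    ∀ k, peel S k = ∅ ∨ (peel S k).card + k ≤ S.card := by
  intro k
  induction k with
  | zero => right; simp [peel]
  | succ k ih =>
    rcases ih with h | h
    · left; exact peel_empty_of_empty h
    rcases Finset.eq_empty_or_nonempty (peel S k) with hne | hne
    · left; exact peel_empty_of_empty hne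
    right
    obtain ⟨x, hx⟩ := extremePts_nonempty hne
    have hsub : peel S (k + 1) ⊂ peel S k := by
      refine ⟨by simp [peel], fun hcon => ?_⟩
      have := hcon (extremePts_subset _ hx)
      simp only [peel, Finset.mem_sdiff] at this
      exact this.2 hx
    have := Finset.card_lt_card hsub
    omega

lemma peel_card_empty {d : ℕ} (S : Finset (EuclideanSpace ℝ (Fin d))) :
    peel S S.card = ∅ := by
  rcases peel_card S S.card with h | h
  · exact h
  · exact Finset.card_eq_zero.1 (by omega)

lemma layerNum_spec {d : ℕ} (S : Finset (EuclideanSpace ℝ (Fin d))) :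
    peel S (layerNum S) = ∅ :=
  Nat.sInf_mem (⟨S.card, peel_card_empty S⟩ : {k | peel S k = ∅}.Nonempty)

lemma layerNum_le {d : ℕ} {S : Finset (EuclideanSpace ℝ (Fin d))} {k : ℕ}
    (h : peel S k = ∅) : layerNum S ≤ k :=
  Nat.sInf_le h

lemma peel_mono {d : ℕ} {S T : Finset (EuclideanSpace ℝ (Fin d))} (h : S ⊆ T) :
    ∀ k, peel S k ⊆ peel T k := by
  intro k
  induction k with
  | zero => exact h
  | succ k ih =>
    intro x hx
    simp only [peel, Finset.mem_sdiff] at hx ⊢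
    obtain ⟨hxS, hxne⟩ := hx
    refine ⟨ih hxS, fun hxe => hxne ?_⟩
    obtain ⟨hxT, hxh⟩ := mem_extremePts.1 hxe
    refine mem_extremePts.2 ⟨hxS, fun hcon => hxh ?_⟩
    exact convexHull_mono (by
      exact_mod_cast Finset.erase_subset_erase x ih) hcon

lemma layerNum_mono {d : ℕ} {S T : Finset (EuclideanSpace ℝ (Fin d))} (h : S ⊆ T) :
    layerNum S ≤ layerNum T := by
  apply layerNum_le
  have := peel_mono h (layerNum T)
  rw [layerNum_spec T] at this
  exact Finset.subset_empty.1 this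

lemma peel_shift {d : ℕ} (S : Finset (EuclideanSpace ℝ (Fin d))) :
    ∀ k, peel S (k + 1) = peel (peel S 1) k := by
  intro k
  induction k with
  | zero => simp [peel]
  | succ k ih =>
    have h : peel S (k + 1 + 1) = peel S (k + 1) \ extremePts (peel S (k + 1)) := rfl
    rw [h, ih]; rfl

lemma layerNum_le_one_add {d : ℕ} (S : Finset (EuclideanSpace ℝ (Fin d))) :
    layerNum S ≤ 1 + layerNum (peel S 1) := by
  apply layerNum_le
  rw [Nat.add_comm, peel_shift]
  exact layerNum_spec (peel S 1)

lemma main_aux {d : ℕ} (u : EuclideanSpace ℝ (Fin d)) (c : ℝ) :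
    ∀ n (X : Finset (EuclideanSpace ℝ (Fin d))),
      (X.filter fun x => c ≤ ⟪x, u⟫).card = n →
      layerNum X ≤ n + layerNum (X.filter fun x => ¬ c ≤ ⟪x, u⟫) := by
  intro n
  induction n using Nat.strong_induction_on with
  | _ n ih =>
    intro X hn
    rcases Finset.eq_empty_or_nonempty (X.filter fun x => c ≤ ⟪x, u⟫) with hA | hA
    · have hXeq : X.filter (fun x => ¬ c ≤ ⟪x, u⟫) = X := by
        apply Finset.filter_true_of_mem
        intro x hx hc
        have h : x ∈ X.filter fun x => c ≤ ⟪x, u⟫ := Finset.mem_filter.2 ⟨hx, hc⟩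
        rw [hA] at h
        exact Finset.notMem_empty x h
      rw [hXeq]
      omega
    · obtain ⟨x, hxe, hxc⟩ := exists_extreme_filter X u c hA
      have hn0 : 0 < n := by
        rw [← hn]
        exact Finset.card_pos.2 hA
      set X' := peel X 1 with hX'
      have hX'eq : X' = X \ extremePts X := by simp [peel, hX']
      have hX'sub : X' ⊆ X := by rw [hX'eq]; exact Finset.sdiff_subset
      have hxnot : x ∉ X' := by
        rw [hX'eq]
        simp [hxe, extremePts_subset X hxe]
      have hss : (X'.filter fun y => c ≤ ⟪y, u⟫) ⊂ (X.filter fun y => c ≤ ⟪y, u⟫) := by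
        refine ⟨Finset.filter_subset_filter _ hX'sub, fun hsub => ?_⟩
        exact hxnot (Finset.mem_filter.1
          (hsub (Finset.mem_filter.2 ⟨extremePts_subset X hxe, hxc⟩))).1
      have hlt : (X'.filter fun y => c ≤ ⟪y, u⟫).card < n := by
        rw [← hn]; exact Finset.card_lt_card hss
      have h1 := ih _ hlt X' rfl
      have h2 : layerNum (X'.filter fun y => ¬ c ≤ ⟪y, u⟫)
          ≤ layerNum (X.filter fun y => ¬ c ≤ ⟪y, u⟫) :=
        layerNum_mono (Finset.filter_subset_filter _ hX'sub)
      have h3 := layerNum_le_one_add X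
      rw [← hX'] at h3
      omega

theorem layerNum_le_halfspace {d : ℕ} (X : Finset (EuclideanSpace ℝ (Fin d)))
    (u : EuclideanSpace ℝ (Fin d)) (hu : u ≠ 0) (c : ℝ) :
    layerNum X ≤ (X.filter fun x => c ≤ ⟪x, u⟫).card
      + layerNum (X.filter fun x => ¬ c ≤ ⟪x, u⟫) := by
  exact main_aux u c _ X rfl
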